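/- Let P, Q, Λ : (0,∞) × ℝ → ℝ be twice continuously differentiable, and suppose P and Q satisfy the Gowdy equations P_tt + P_t/t − P_xx = e^{2P}(Q_t² − Q_x²) and Q_tt + Q_t/t − Q_xx = −2(P_t Q_t − P_x Q_x) on (0,∞) × ℝ. Define the constraint quantities C₁ := −Λ_t + t P_x² + t e^{2P} Q_x² + t P_t² + t e^{2P} Q_t², C₂ := −Λ_x + 2t P_x P_t + 2t e^{2P} Q_x Q_t, and H := −Λ_tt + Λ_xx + P_x² − P_t² + e^{2P}(Q_x² − Q_t²). Then the subsidiary system ∂_t C₁ = ∂_x C₂ + H and ∂_t C₂ = ∂_x C₁ holds on (0,∞) × ℝ. -/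

import Mathlib

/-!
Differentiating `C₁` and `C₂` by the product and chain rules, the mixed partials of `P`, `Q`, `Λ`
cancel by the symmetry of second derivatives of `C²` functions. What remains is `t` times the Gowdy
equations, weighted by `2 P_t` and `2 e^{2P} Q_t` in the first identity and by `2 P_x` and
`2 e^{2P} Q_x` in the second.
-/

noncomputable section

/-- Partial derivative in the first (time) variable. -/
def pdt (f : ℝ → ℝ → ℝ) (t x : ℝ) : ℝ := deriv (fun s => f s x) t

/-- Partial derivative in the second (space) variable. -/
def pdx (f : ℝ → ℝ → ℝ) (t x : ℝ) : ℝ := deriv (fun y => f t y) x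

/-- The first Gowdy constraint quantity `C₁`. -/
def gowdyC1 (P Q Λ : ℝ → ℝ → ℝ) (t x : ℝ) : ℝ :=
  -pdt Λ t x + t * (pdx P t x) ^ 2 + t * Real.exp (2 * P t x) * (pdx Q t x) ^ 2
    + t * (pdt P t x) ^ 2 + t * Real.exp (2 * P t x) * (pdt Q t x) ^ 2

/-- The second Gowdy constraint quantity `C₂`. -/
def gowdyC2 (P Q Λ : ℝ → ℝ → ℝ) (t x : ℝ) : ℝ :=
  -pdx Λ t x + 2 * t * pdx P t x * pdt P t x
    + 2 * t * Real.exp (2 * P t x) * pdx Q t x * pdt Q t x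

/-- The residual `H` of the wave equation for `Λ`. -/
def gowdyH (P Q Λ : ℝ → ℝ → ℝ) (t x : ℝ) : ℝ :=
  -pdt (pdt Λ) t x + pdx (pdx Λ) t x + (pdx P t x) ^ 2 - (pdt P t x) ^ 2
    + Real.exp (2 * P t x) * ((pdx Q t x) ^ 2 - (pdt Q t x) ^ 2)

open Function Topology

theorem ContDiffAt.eventually_differentiableAt {𝕜 E F : Type*} [NontriviallyNormedField 𝕜]
    [NormedAddCommGroup E] [NormedSpace 𝕜 E] [NormedAddCommGroup F] [NormedSpace 𝕜 F]
    {g : E → F} {a : E} {n : WithTop ℕ∞} (hg : ContDiffAt 𝕜 n g a) (hn : 1 ≤ n) :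
    ∀ᶠ b in 𝓝 a, DifferentiableAt 𝕜 g b :=
  ((hg.of_le hn).eventually (by simp)).mono fun _ hb => hb.differentiableAt one_ne_zero

section PartialDerivatives

variable {f : ℝ → ℝ → ℝ} {t x : ℝ}

theorem hasDerivAt_fderiv_apply_pdt (hf : DifferentiableAt ℝ (uncurry f) (t, x)) :
    HasDerivAt (fun s => f s x) (fderiv ℝ (uncurry f) (t, x) (1, 0)) t :=
  hf.hasFDerivAt.comp_hasDerivAt (f := fun s => (s, x)) t
    ((hasDerivAt_id t).prodMk (hasDerivAt_const t x))

theorem hasDerivAt_fderiv_apply_pdx (hf : DifferentiableAt ℝ (uncurry f) (t, x)) :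
    HasDerivAt (fun y => f t y) (fderiv ℝ (uncurry f) (t, x) (0, 1)) x :=
  hf.hasFDerivAt.comp_hasDerivAt (f := fun y => (t, y)) x
    ((hasDerivAt_const x t).prodMk (hasDerivAt_id x))

theorem pdt_eq_fderiv_apply (hf : DifferentiableAt ℝ (uncurry f) (t, x)) :
    pdt f t x = fderiv ℝ (uncurry f) (t, x) (1, 0) :=
  (hasDerivAt_fderiv_apply_pdt hf).deriv

theorem pdx_eq_fderiv_apply (hf : DifferentiableAt ℝ (uncurry f) (t, x)) :
    pdx f t x = fderiv ℝ (uncurry f) (t, x) (0, 1) :=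
  (hasDerivAt_fderiv_apply_pdx hf).deriv

theorem hasDerivAt_pdt (hf : DifferentiableAt ℝ (uncurry f) (t, x)) :
    HasDerivAt (fun s => f s x) (pdt f t x) t :=
  pdt_eq_fderiv_apply hf ▸ hasDerivAt_fderiv_apply_pdt hf

theorem hasDerivAt_pdx (hf : DifferentiableAt ℝ (uncurry f) (t, x)) :
    HasDerivAt (fun y => f t y) (pdx f t x) x :=
  pdx_eq_fderiv_apply hf ▸ hasDerivAt_fderiv_apply_pdx hf

variable {p : ℝ × ℝ} {m n : WithTop ℕ∞}

theorem ContDiffAt.uncurry_pdt_eventuallyEq (hf : ContDiffAt ℝ n (uncurry f) p) (hn : 1 ≤ n) :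
    uncurry (pdt f) =ᶠ[𝓝 p] fun q => fderiv ℝ (uncurry f) q (1, 0) :=
  (hf.eventually_differentiableAt hn).mono fun _ hq => pdt_eq_fderiv_apply hq

theorem ContDiffAt.uncurry_pdx_eventuallyEq (hf : ContDiffAt ℝ n (uncurry f) p) (hn : 1 ≤ n) :
    uncurry (pdx f) =ᶠ[𝓝 p] fun q => fderiv ℝ (uncurry f) q (0, 1) :=
  (hf.eventually_differentiableAt hn).mono fun _ hq => pdx_eq_fderiv_apply hq

theorem ContDiffAt.uncurry_pdt (hf : ContDiffAt ℝ n (uncurry f) p) (hmn : m + 1 ≤ n) :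
    ContDiffAt ℝ m (uncurry (pdt f)) p :=
  ((hf.fderiv_right hmn).clm_apply contDiffAt_const).congr_of_eventuallyEq
    (hf.uncurry_pdt_eventuallyEq (le_trans le_add_self hmn))

theorem ContDiffAt.uncurry_pdx (hf : ContDiffAt ℝ n (uncurry f) p) (hmn : m + 1 ≤ n) :
    ContDiffAt ℝ m (uncurry (pdx f)) p :=
  ((hf.fderiv_right hmn).clm_apply contDiffAt_const).congr_of_eventuallyEq
    (hf.uncurry_pdx_eventuallyEq (le_trans le_add_self hmn))

theorem ContDiffAt.differentiableAt_uncurry_pdt (hf : ContDiffAt ℝ 2 (uncurry f) p) :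
    DifferentiableAt ℝ (uncurry (pdt f)) p :=
  (hf.uncurry_pdt le_rfl).differentiableAt one_ne_zero

theorem ContDiffAt.differentiableAt_uncurry_pdx (hf : ContDiffAt ℝ 2 (uncurry f) p) :
    DifferentiableAt ℝ (uncurry (pdx f)) p :=
  (hf.uncurry_pdx le_rfl).differentiableAt one_ne_zero

theorem fderiv_uncurry_pdt_apply (hf : ContDiffAt ℝ 2 (uncurry f) p) (v : ℝ × ℝ) :
    fderiv ℝ (uncurry (pdt f)) p v = fderiv ℝ (fderiv ℝ (uncurry f)) p v (1, 0) := by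
  rw [(hf.uncurry_pdt_eventuallyEq one_le_two).fderiv_eq,
    fderiv_clm_apply ((hf.fderiv_right le_rfl).differentiableAt one_ne_zero)
      (differentiableAt_const _)]
  simp

theorem fderiv_uncurry_pdx_apply (hf : ContDiffAt ℝ 2 (uncurry f) p) (v : ℝ × ℝ) :
    fderiv ℝ (uncurry (pdx f)) p v = fderiv ℝ (fderiv ℝ (uncurry f)) p v (0, 1) := by
  rw [(hf.uncurry_pdx_eventuallyEq one_le_two).fderiv_eq,
    fderiv_clm_apply ((hf.fderiv_right le_rfl).differentiableAt one_ne_zero)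
      (differentiableAt_const _)]
  simp

theorem pdx_pdt_eq_pdt_pdx (hf : ContDiffAt ℝ 2 (uncurry f) (t, x)) :
    pdx (pdt f) t x = pdt (pdx f) t x := by
  rw [pdx_eq_fderiv_apply hf.differentiableAt_uncurry_pdt,
    pdt_eq_fderiv_apply hf.differentiableAt_uncurry_pdx,
    fderiv_uncurry_pdt_apply hf, fderiv_uncurry_pdx_apply hf]
  exact hf.isSymmSndFDerivAt (by simp [minSmoothness_of_isRCLikeNormedField]) _ _

end PartialDerivatives

section ConstraintDerivatives

variable {P Q Λ : ℝ → ℝ → ℝ} {t x : ℝ}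

theorem pdt_gowdyC1 (hP : ContDiffAt ℝ 2 (uncurry P) (t, x))
    (hQ : ContDiffAt ℝ 2 (uncurry Q) (t, x)) (hΛ : ContDiffAt ℝ 2 (uncurry Λ) (t, x)) :
    pdt (gowdyC1 P Q Λ) t x =
      -pdt (pdt Λ) t x + pdx P t x ^ 2 + pdt P t x ^ 2
        + Real.exp (2 * P t x) * (pdx Q t x ^ 2 + pdt Q t x ^ 2)
        + 2 * t * (pdx P t x * pdt (pdx P) t x + pdt P t x * pdt (pdt P) t x)
        + 2 * t * Real.exp (2 * P t x) * (pdt P t x * (pdx Q t x ^ 2 + pdt Q t x ^ 2)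
          + pdx Q t x * pdt (pdx Q) t x + pdt Q t x * pdt (pdt Q) t x) := by
  have hE := ((hasDerivAt_pdt (hP.differentiableAt two_ne_zero)).const_mul 2).exp
  have hPx := hasDerivAt_pdt hP.differentiableAt_uncurry_pdx
  have hPt := hasDerivAt_pdt hP.differentiableAt_uncurry_pdt
  have hQx := hasDerivAt_pdt hQ.differentiableAt_uncurry_pdx
  have hQt := hasDerivAt_pdt hQ.differentiableAt_uncurry_pdt
  have hΛt := hasDerivAt_pdt hΛ.differentiableAt_uncurry_pdt
  have hid := hasDerivAt_id t
  refine ((((hΛt.neg.add (hid.mul (hPx.pow 2))).add ((hid.mul hE).mul (hQx.pow 2))).add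
    (hid.mul (hPt.pow 2))).add ((hid.mul hE).mul (hQt.pow 2))).deriv.trans ?_
  simp only [id_eq, Pi.pow_apply, Pi.mul_apply, Nat.cast_ofNat]
  ring

theorem pdx_gowdyC1 (hP : ContDiffAt ℝ 2 (uncurry P) (t, x))
    (hQ : ContDiffAt ℝ 2 (uncurry Q) (t, x)) (hΛ : ContDiffAt ℝ 2 (uncurry Λ) (t, x)) :
    pdx (gowdyC1 P Q Λ) t x =
      -pdx (pdt Λ) t x
        + 2 * t * (pdx P t x * pdx (pdx P) t x + pdt P t x * pdx (pdt P) t x)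
        + 2 * t * Real.exp (2 * P t x) * (pdx P t x * (pdx Q t x ^ 2 + pdt Q t x ^ 2)
          + pdx Q t x * pdx (pdx Q) t x + pdt Q t x * pdx (pdt Q) t x) := by
  have hE := ((hasDerivAt_pdx (hP.differentiableAt two_ne_zero)).const_mul 2).exp
  have hPx := hasDerivAt_pdx hP.differentiableAt_uncurry_pdx
  have hPt := hasDerivAt_pdx hP.differentiableAt_uncurry_pdt
  have hQx := hasDerivAt_pdx hQ.differentiableAt_uncurry_pdx
  have hQt := hasDerivAt_pdx hQ.differentiableAt_uncurry_pdt
  have hΛt := hasDerivAt_pdx hΛ.differentiableAt_uncurry_pdt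
  refine ((((hΛt.neg.add ((hPx.pow 2).const_mul t)).add ((hE.const_mul t).mul (hQx.pow 2))).add
    ((hPt.pow 2).const_mul t)).add ((hE.const_mul t).mul (hQt.pow 2))).deriv.trans ?_
  simp only [Pi.pow_apply, Nat.cast_ofNat]
  ring

theorem pdt_gowdyC2 (hP : ContDiffAt ℝ 2 (uncurry P) (t, x))
    (hQ : ContDiffAt ℝ 2 (uncurry Q) (t, x)) (hΛ : ContDiffAt ℝ 2 (uncurry Λ) (t, x)) :
    pdt (gowdyC2 P Q Λ) t x =
      -pdt (pdx Λ) t x + 2 * pdx P t x * pdt P t x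
        + 2 * Real.exp (2 * P t x) * pdx Q t x * pdt Q t x
        + 2 * t * (pdt (pdx P) t x * pdt P t x + pdx P t x * pdt (pdt P) t x)
        + 2 * t * Real.exp (2 * P t x) * (2 * pdt P t x * pdx Q t x * pdt Q t x
          + pdt (pdx Q) t x * pdt Q t x + pdx Q t x * pdt (pdt Q) t x) := by
  have hE := ((hasDerivAt_pdt (hP.differentiableAt two_ne_zero)).const_mul 2).exp
  have hPx := hasDerivAt_pdt hP.differentiableAt_uncurry_pdx
  have hPt := hasDerivAt_pdt hP.differentiableAt_uncurry_pdt
  have hQx := hasDerivAt_pdt hQ.differentiableAt_uncurry_pdx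
  have hQt := hasDerivAt_pdt hQ.differentiableAt_uncurry_pdt
  have hΛx := hasDerivAt_pdt hΛ.differentiableAt_uncurry_pdx
  have h2t := (hasDerivAt_id t).const_mul 2
  refine ((hΛx.neg.add ((h2t.mul hPx).mul hPt)).add
    (((h2t.mul hE).mul hQx).mul hQt)).deriv.trans ?_
  simp only [id_eq, Pi.mul_apply]
  ring

theorem pdx_gowdyC2 (hP : ContDiffAt ℝ 2 (uncurry P) (t, x))
    (hQ : ContDiffAt ℝ 2 (uncurry Q) (t, x)) (hΛ : ContDiffAt ℝ 2 (uncurry Λ) (t, x)) :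
    pdx (gowdyC2 P Q Λ) t x =
      -pdx (pdx Λ) t x
        + 2 * t * (pdx (pdx P) t x * pdt P t x + pdx P t x * pdx (pdt P) t x)
        + 2 * t * Real.exp (2 * P t x) * (2 * pdx P t x * pdx Q t x * pdt Q t x
          + pdx (pdx Q) t x * pdt Q t x + pdx Q t x * pdx (pdt Q) t x) := by
  have hE := ((hasDerivAt_pdx (hP.differentiableAt two_ne_zero)).const_mul 2).exp
  have hPx := hasDerivAt_pdx hP.differentiableAt_uncurry_pdx
  have hPt := hasDerivAt_pdx hP.differentiableAt_uncurry_pdt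
  have hQx := hasDerivAt_pdx hQ.differentiableAt_uncurry_pdx
  have hQt := hasDerivAt_pdx hQ.differentiableAt_uncurry_pdt
  have hΛx := hasDerivAt_pdx hΛ.differentiableAt_uncurry_pdx
  refine ((hΛx.neg.add ((hPx.const_mul (2 * t)).mul hPt)).add
    (((hE.const_mul (2 * t)).mul hQx).mul hQt)).deriv.trans ?_
  simp only [Pi.mul_apply]
  ring

end ConstraintDerivatives

/-- If `P, Q, Λ` are `C²` on `(0,∞) × ℝ` and `P, Q` satisfy the Gowdy
equations, then the constraint quantities `C₁, C₂` and wave residual `H` satisfy the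
subsidiary system `∂_t C₁ = ∂ₓ C₂ + H`, `∂_t C₂ = ∂ₓ C₁`. -/
theorem gowdy_subsidiary_system (P Q Λ : ℝ → ℝ → ℝ)
    (hPreg : ContDiffOn ℝ 2 (Function.uncurry P) (Set.Ioi 0 ×ˢ Set.univ))
    (hQreg : ContDiffOn ℝ 2 (Function.uncurry Q) (Set.Ioi 0 ×ˢ Set.univ))
    (hΛreg : ContDiffOn ℝ 2 (Function.uncurry Λ) (Set.Ioi 0 ×ˢ Set.univ))
    (hGowdyP : ∀ t : ℝ, 0 < t → ∀ x : ℝ,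
      pdt (pdt P) t x + pdt P t x / t - pdx (pdx P) t x
        = Real.exp (2 * P t x) * ((pdt Q t x) ^ 2 - (pdx Q t x) ^ 2))
    (hGowdyQ : ∀ t : ℝ, 0 < t → ∀ x : ℝ,
      pdt (pdt Q) t x + pdt Q t x / t - pdx (pdx Q) t x
        = -2 * (pdt P t x * pdt Q t x - pdx P t x * pdx Q t x)) :
    ∀ t : ℝ, 0 < t → ∀ x : ℝ,
      pdt (gowdyC1 P Q Λ) t x = pdx (gowdyC2 P Q Λ) t x + gowdyH P Q Λ t x ∧
      pdt (gowdyC2 P Q Λ) t x = pdx (gowdyC1 P Q Λ) t x := by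
  intro t ht x
  have hU : Set.Ioi 0 ×ˢ Set.univ ∈ 𝓝 (t, x) := prod_mem_nhds (Ioi_mem_nhds ht) Filter.univ_mem
  have hP := hPreg.contDiffAt hU
  have hQ := hQreg.contDiffAt hU
  have hΛ := hΛreg.contDiffAt hU
  rw [pdt_gowdyC1 hP hQ hΛ, pdx_gowdyC1 hP hQ hΛ, pdt_gowdyC2 hP hQ hΛ, pdx_gowdyC2 hP hQ hΛ,
    pdx_pdt_eq_pdt_pdx hP, pdx_pdt_eq_pdt_pdx hQ, pdx_pdt_eq_pdt_pdx hΛ, gowdyH]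
  have ht0 : t ≠ 0 := ht.ne'
  constructor
  · linear_combination (norm := (field_simp; ring))
      2 * t * pdt P t x * hGowdyP t ht x
        + 2 * t * Real.exp (2 * P t x) * pdt Q t x * hGowdyQ t ht x
  · linear_combination (norm := (field_simp; ring))
      2 * t * pdx P t x * hGowdyP t ht x
        + 2 * t * Real.exp (2 * P t x) * pdx Q t x * hGowdyQ t ht x
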